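/- Let D be a set with |D| ≥ 2 and let a, c be distinct elements of D. Define the operation ⊣ on D by: a ⊣ a = a; a ⊣ y = c for y ≠ a; and x ⊣ y = x for x ≠ a. Then ⊣ is associative and right commutative, and a bijection f : D → D is an automorphism of (D,⊣) if and only if f(a) = a and f(c) = c; hence the automorphism group of LOB_D = (D,⊣) is isomorphic to S_{D∖{a,c}}. -/

import Mathlib

/-- A dimonoid: two associative operations `ld` (⊣) and `rd` (⊢) satisfying
axioms (D1), (D2), (D3). -/
def IsDimonoid {D : Type*} (ld rd : D → D → D) : Prop :=
  (∀ x y z, ld (ld x y) z = ld x (ld y z)) ∧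
  (∀ x y z, rd (rd x y) z = rd x (rd y z)) ∧
  (∀ x y z, ld (ld x y) z = ld x (rd y z)) ∧
  (∀ x y z, ld (rd x y) z = rd x (ld y z)) ∧
  (∀ x y z, rd (ld x y) z = rd x (rd y z))

/-- The automorphism group of a magma `(D, op)`, as a subgroup of `Equiv.Perm D`. -/
def semigroupAutGroup {D : Type*} (op : D → D → D) : Subgroup (Equiv.Perm D) where
  carrier := {f : Equiv.Perm D | ∀ x y, f (op x y) = op (f x) (f y)}
  one_mem' := fun _ _ => rfl
  mul_mem' := by
    intro f g hf hg
    simp only [Set.mem_setOf_eq] at hf hg ⊢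
    intro x y
    simp [Equiv.Perm.mul_apply, hg, hf]
  inv_mem' := by
    intro f hf
    simp only [Set.mem_setOf_eq] at hf ⊢
    intro x y
    apply f.injective
    have apply_inv_self : ∀ z, f (f⁻¹ z) = z := fun z => f.apply_symm_apply z
    rw [apply_inv_self, hf, apply_inv_self, apply_inv_self]

/-- The automorphism group of a dimonoid `(D, ld, rd)`. -/
def dimonoidAutGroup {D : Type*} (ld rd : D → D → D) : Subgroup (Equiv.Perm D) :=
  semigroupAutGroup ld ⊓ semigroupAutGroup rd

/-!
Associativity and right commutativity are a case analysis on which arguments equal `a`.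
An automorphism `f` must fix `a`, since otherwise `f c = f (a ⊣ c) = f a ⊣ f c = f a`; then
`f c = f (a ⊣ c) = a ⊣ f c = c`. Conversely a bijection fixing `a` and `c` preserves every case
of the definition. So the automorphism group consists of the permutations supported on
`D ∖ {a, c}`, the image of the injective extension-by-identity map `Perm (D ∖ {a, c}) →* Perm D`.
-/

namespace Equiv.Perm

theorem mem_range_ofSubtype_iff_apply_eq_of_not {α : Type*} {p : α → Prop} [DecidablePred p]
    {g : Perm α} : g ∈ (ofSubtype : Perm (Subtype p) →* Perm α).range ↔ ∀ x, ¬p x → g x = x := by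
  constructor
  · rintro ⟨k, rfl⟩ x hx
    exact ofSubtype_apply_of_not_mem k hx
  · intro hg
    exact ⟨_, congrArg Subtype.val ((Perm.subtypeEquivSubtypePerm p).apply_symm_apply ⟨g, hg⟩)⟩

end Equiv.Perm

open Equiv Perm

section LOB

variable {D : Type*} [DecidableEq D]

def lobOp (a c x y : D) : D :=
  if x = a then (if y = a then a else c) else x

theorem eq_lobOp {a c : D} {ld : D → D → D} (hld1 : ld a a = a)
    (hld2 : ∀ y, y ≠ a → ld a y = c) (hld3 : ∀ x y, x ≠ a → ld x y = x) :
    ld = lobOp a c := by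
  funext x y
  unfold lobOp
  split_ifs with hx hy
  · rw [hx, hy, hld1]
  · rw [hx, hld2 y hy]
  · exact hld3 x y hx

theorem lobOp_assoc (a c x y z : D) :
    lobOp a c (lobOp a c x y) z = lobOp a c x (lobOp a c y z) := by
  unfold lobOp
  split_ifs <;> simp_all

theorem lobOp_right_comm (a c s x y : D) :
    lobOp a c (lobOp a c s x) y = lobOp a c (lobOp a c s y) x := by
  unfold lobOp
  split_ifs <;> simp_all

theorem map_lobOp_iff {a c : D} (hac : a ≠ c) {f : D → D} (hf : Function.Injective f) :
    (∀ x y, f (lobOp a c x y) = lobOp a c (f x) (f y)) ↔ f a = a ∧ f c = c := by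
  constructor
  · intro hmap
    have hfc : f c = lobOp a c (f a) (f c) := by
      simpa [lobOp, hac.symm] using hmap a c
    have hfa : f a = a := by
      by_contra hfa
      exact hac (hf (by simpa [lobOp, hfa] using hfc.symm))
    refine ⟨hfa, ?_⟩
    have hfc_ne : f c ≠ a := fun h => hac (hf (hfa.trans h.symm))
    simpa [lobOp, hfa, hfc_ne] using hfc
  · rintro ⟨hfa, hfc⟩ x y
    have hf_eq_a : ∀ z, f z = a ↔ z = a := fun z => hf.eq_iff' hfa
    unfold lobOp
    split_ifs <;> simp_all

theorem semigroupAutGroup_lobOp {a c : D} (hac : a ≠ c) :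
    semigroupAutGroup (lobOp a c) =
      (ofSubtype : Perm ↥(({a, c} : Set D)ᶜ) →* Perm D).range := by
  ext f
  rw [mem_range_ofSubtype_iff_apply_eq_of_not]
  change (∀ x y, f (lobOp a c x y) = lobOp a c (f x) (f y)) ↔ _
  rw [map_lobOp_iff hac f.injective]
  simp only [Set.mem_compl_iff, Set.mem_insert_iff, Set.mem_singleton_iff, not_not, or_imp,
    forall_and, forall_eq]

end LOB

/-- For distinct `a, c ∈ D`, the semigroup `LOB_D` with `a ⊣ a = a`,
`a ⊣ y = c` for `y ≠ a`, and `x ⊣ y = x` for `x ≠ a` is associative and right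
commutative; its automorphisms are exactly the bijections fixing `a` and `c`,
and its automorphism group is isomorphic to `S_{D∖{a,c}}`. -/
theorem LOB_D_semigroup {D : Type*} (a c : D) (hac : a ≠ c) (ld : D → D → D)
    (hld1 : ld a a = a)
    (hld2 : ∀ y, y ≠ a → ld a y = c)
    (hld3 : ∀ x y, x ≠ a → ld x y = x) :
    (∀ x y z, ld (ld x y) z = ld x (ld y z)) ∧
    (∀ s x y, ld (ld s x) y = ld (ld s y) x) ∧
    (∀ f : Equiv.Perm D,
      (∀ x y, f (ld x y) = ld (f x) (f y)) ↔ (f a = a ∧ f c = c)) ∧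
    Nonempty (↥(semigroupAutGroup ld) ≃* Equiv.Perm ↥(({a, c} : Set D)ᶜ)) := by
  classical
  obtain rfl := eq_lobOp hld1 hld2 hld3
  exact ⟨lobOp_assoc a c, lobOp_right_comm a c, fun f => map_lobOp_iff hac f.injective,
    ⟨(MulEquiv.subgroupCongr (semigroupAutGroup_lobOp hac)).trans
      (MonoidHom.ofInjective ofSubtype_injective).symm⟩⟩
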